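/- Let K be an infinite field, n ≥ 2 and m ≥ 1 integers, and p(x_1,...,x_m) a noncommutative polynomial with zero constant term over K of order r with 1 < r < n − 1. If A′ = (a′_{ij}) ∈ T_n(K)^{(r−1)} is such that every entry a′_{s,r+s} on the (r)-th superdiagonal is nonzero (for all 1 ≤ s ≤ n − r), then A′ lies in the image p(T_n(K)). -/

import Mathlib

/-- `A` is upper triangular. -/
def UT {K : Type*} [Field K] {n : ℕ} (A : Matrix (Fin n) (Fin n) K) : Prop :=
  ∀ i j : Fin n, (j : ℕ) < (i : ℕ) → A i j = 0

/-- `p` has zero constant term. -/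
def ZeroConst {K : Type*} [Field K] {m : ℕ} (p : FreeAlgebra K (Fin m)) : Prop :=
  FreeAlgebra.lift K (fun _ : Fin m => (0 : K)) p = 0

/-- `p` has order `r`: it vanishes on all upper triangular `r × r` matrices but not on
all upper triangular `(r+1) × (r+1)` matrices. -/
def HasOrder {K : Type*} [Field K] {m : ℕ} (p : FreeAlgebra K (Fin m)) (r : ℕ) : Prop :=
  (∀ u : Fin m → Matrix (Fin r) (Fin r) K, (∀ i, UT (u i)) →
      FreeAlgebra.lift K u p = 0) ∧
  ∃ u : Fin m → Matrix (Fin (r + 1)) (Fin (r + 1)) K, (∀ i, UT (u i)) ∧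
      FreeAlgebra.lift K u p ≠ 0


/-!
Conjugation by an invertible upper triangular matrix commutes with evaluating `p`, so the image
of `p` on `T_n(K)` is stable under it. Restricting to diagonal blocks of size `r` shows that the
image lies in `T_n(K)^{(r-1)}`; placing the `(r + 1) × (r + 1)` witness of order `r` as a
diagonal block makes any one entry of the `r`-th superdiagonal nonzero, and since `K` is
infinite, a specialization of generic upper triangular matrices makes all of them nonzero at
once. Finally any `B ∈ T_n(K)^{(r-1)}` with nonzero `r`-th superdiagonal is conjugate to `A'`:
a diagonal matrix matches the two superdiagonals, and then `(1 + N) B = A' (1 + N)` is solved for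
a strictly upper triangular `N` by back substitution, the coefficient of each unknown being a
nonzero entry of the `r`-th superdiagonal.
-/

open Matrix

namespace FreeAlgebra

variable {R X A B : Type*} [CommSemiring R] [Semiring A] [Algebra R A] [Semiring B] [Algebra R B]

theorem lift_mem_of_forall_mem {S : Subalgebra R A} {f : X → A} (hf : ∀ x, f x ∈ S)
    (p : FreeAlgebra R X) : lift R f p ∈ S :=
  Algebra.adjoin_le (Set.range_subset_iff.2 hf) <| by
    rw [Algebra.adjoin_range_eq_range_freeAlgebra_lift]
    exact ⟨p, rfl⟩

theorem apply_lift (g : A →ₐ[R] B) (f : X → A) (p : FreeAlgebra R X) :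
    g (lift R f p) = lift R (g ∘ f) p :=
  DFunLike.congr_fun ((lift_unique (g ∘ f) (g.comp (lift R f))).1 (by ext; simp)) p

theorem lift_units_conj (U : Aˣ) (f : X → A) (p : FreeAlgebra R X) :
    lift R (fun x => ↑U * f x * ↑U⁻¹) p = ↑U * lift R f p * ↑U⁻¹ := by
  have h := apply_lift (MulSemiringAction.toAlgEquiv R A (ConjAct.toConjAct U)).toAlgHom f p
  simpa [ConjAct.units_smul_def, Function.comp_def] using h.symm

end FreeAlgebra

namespace Matrix

variable {ι κ R X : Type*}

noncomputable def extend [Zero R] (M : Matrix ι ι R) (e : ι → κ) : Matrix κ κ R :=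
  of fun i j => Function.extend e (fun a => Function.extend e (M a) 0 j) 0 i

theorem submatrix_extend [Zero R] (M : Matrix ι ι R) {e : ι → κ} (he : e.Injective) :
    (M.extend e).submatrix e e = M := by
  ext a b
  simp [extend, he.extend_apply]

variable [LinearOrder ι] [LinearOrder κ]

theorem IsUpperTriangular.lift [Fintype ι] [CommSemiring R] {u : X → Matrix ι ι R}
    (hu : ∀ x, (u x).IsUpperTriangular) (p : FreeAlgebra R X) :
    (FreeAlgebra.lift R u p).IsUpperTriangular :=
  FreeAlgebra.lift_mem_of_forall_mem (S := blockTriangularSubalgebra R R id) hu p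

theorem IsUpperTriangular.units_inv [Fintype ι] [CommRing R] {U : (Matrix ι ι R)ˣ}
    (hU : (U : Matrix ι ι R).IsUpperTriangular) : (↑U⁻¹ : Matrix ι ι R).IsUpperTriangular := by
  let _ := U.invertible
  rw [coe_units_inv]
  exact blockTriangular_inv_of_blockTriangular hU

theorem IsUpperTriangular.units_conj [Fintype ι] [CommRing R] {U : (Matrix ι ι R)ˣ}
    {M : Matrix ι ι R} (hU : (U : Matrix ι ι R).IsUpperTriangular) (hM : M.IsUpperTriangular) :
    ((U : Matrix ι ι R) * M * (↑U⁻¹ : Matrix ι ι R)).IsUpperTriangular :=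
  (hU.mul hM).mul hU.units_inv

theorem IsUpperTriangular.submatrix [Zero R] {M : Matrix κ κ R} (hM : M.IsUpperTriangular)
    (e : ι ↪o κ) : (M.submatrix e e).IsUpperTriangular :=
  fun _ _ hab => hM (e.strictMono hab)

theorem IsUpperTriangular.submatrix_mul [Fintype ι] [Fintype κ] [CommSemiring R]
    {M N : Matrix κ κ R} (hM : M.IsUpperTriangular) (hN : N.IsUpperTriangular) {e : ι ↪o κ}
    (he : (Set.range e).OrdConnected) :
    (M * N).submatrix e e = M.submatrix e e * N.submatrix e e := by
  ext a b
  simp only [submatrix_apply, mul_apply]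
  refine (Fintype.sum_of_injective e e.injective _ _ (fun l hl => ?_) fun _ => rfl).symm
  rcases lt_or_ge l (e a) with hla | hla
  · rw [hM hla, zero_mul]
  rcases lt_or_ge (e b) l with hlb | hlb
  · rw [hN hlb, mul_zero]
  exact absurd (he.out ⟨a, rfl⟩ ⟨b, rfl⟩ ⟨hla, hlb⟩) hl

variable (R) in
def submatrixAlgHom [Fintype ι] [Fintype κ] [CommSemiring R] (e : ι ↪o κ)
    (he : (Set.range e).OrdConnected) :
    blockTriangularSubalgebra R R (id : κ → κ) →ₐ[R] Matrix ι ι R where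
  toFun M := (M : Matrix κ κ R).submatrix e e
  map_one' := submatrix_one _ e.injective
  map_mul' M N := IsUpperTriangular.submatrix_mul M.2 N.2 he
  map_zero' := rfl
  map_add' _ _ := rfl
  commutes' c := by simp [algebraMap_eq_diagonal, submatrix_diagonal _ _ e.injective]

theorem IsUpperTriangular.lift_submatrix [Fintype ι] [Fintype κ] [CommSemiring R]
    {u : X → Matrix κ κ R} (hu : ∀ x, (u x).IsUpperTriangular) {e : ι ↪o κ}
    (he : (Set.range e).OrdConnected) (p : FreeAlgebra R X) :
    (FreeAlgebra.lift R u p).submatrix e e =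
      FreeAlgebra.lift R (fun x => (u x).submatrix e e) p := by
  let v : X → blockTriangularSubalgebra R R (id : κ → κ) := fun x => ⟨u x, hu x⟩
  have hv : FreeAlgebra.lift R u p = (FreeAlgebra.lift R v p : Matrix κ κ R) :=
    (FreeAlgebra.apply_lift (blockTriangularSubalgebra R R id).val v p).symm
  rw [hv]
  exact FreeAlgebra.apply_lift (submatrixAlgHom R e he) v p

theorem IsUpperTriangular.extend [Zero R] {M : Matrix ι ι R} (hM : M.IsUpperTriangular)
    (e : ι ↪o κ) : (M.extend e).IsUpperTriangular := by
  intro i j hji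
  by_cases hi : ∃ a, e a = i
  · obtain ⟨a, rfl⟩ := hi
    by_cases hj : ∃ b, e b = j
    · obtain ⟨b, rfl⟩ := hj
      simpa [Matrix.extend, e.injective.extend_apply] using hM (e.lt_iff_lt.1 hji)
    · simp [Matrix.extend, e.injective.extend_apply, Function.extend_apply' _ _ _ hj]
  · simp [Matrix.extend, Function.extend_apply' _ _ _ hi]

def window {s t n : ℕ} (h : s + t ≤ n) : Fin t ↪o Fin n :=
  (Fin.natAddOrderEmb s).trans (Fin.castLEOrderEmb h)

@[simp]
theorem coe_window_apply {s t n : ℕ} (h : s + t ≤ n) (a : Fin t) : (window h a : ℕ) = s + a :=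
  rfl

theorem ordConnected_range_window {s t n : ℕ} (h : s + t ≤ n) :
    (Set.range (window h)).OrdConnected := by
  refine ⟨?_⟩
  rintro _ ⟨a, rfl⟩ _ ⟨b, rfl⟩ c ⟨hac, hcb⟩
  have hac : s + (a : ℕ) ≤ c := hac
  have hcb : (c : ℕ) ≤ s + b := hcb
  exact ⟨⟨c - s, by omega⟩, Fin.ext (by simp; omega)⟩

end Matrix

section HasOrder

variable {K : Type*} [Field K] {m n r : ℕ} {p : FreeAlgebra K (Fin m)}

theorem ut_iff_isUpperTriangular {A : Matrix (Fin n) (Fin n) K} : UT A ↔ A.IsUpperTriangular :=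
  Iff.rfl

theorem lift_apply_eq_zero_of_lt_add (hrn : r ≤ n)
    (hp : ∀ v : Fin m → Matrix (Fin r) (Fin r) K, (∀ k, UT (v k)) → FreeAlgebra.lift K v p = 0)
    {u : Fin m → Matrix (Fin n) (Fin n) K} (hu : ∀ k, UT (u k)) {i j : Fin n}
    (hij : (j : ℕ) < i + r) : FreeAlgebra.lift K u p i j = 0 := by
  replace hu k := ut_iff_isUpperTriangular.1 (hu k)
  rcases lt_or_ge j i with hji | hij'
  · exact IsUpperTriangular.lift hu p hji
  set s := min (i : ℕ) (n - r)
  have hs : s + r ≤ n := by omega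
  have key := congr_fun₂ (IsUpperTriangular.lift_submatrix hu (ordConnected_range_window hs) p)
    ⟨i - s, by omega⟩ ⟨j - s, by omega⟩
  rw [hp _ fun k => ut_iff_isUpperTriangular.2 ((hu k).submatrix _)] at key
  have hi : window hs ⟨i - s, by omega⟩ = i := Fin.ext (by simp only [coe_window_apply]; omega)
  have hj : window hs ⟨j - s, by omega⟩ = j := Fin.ext (by simp only [coe_window_apply]; omega)
  simpa [hi, hj] using key

theorem lift_apply_zero_last_ne_zero
    (hp : ∀ v : Fin m → Matrix (Fin r) (Fin r) K, (∀ k, UT (v k)) → FreeAlgebra.lift K v p = 0)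
    {u : Fin m → Matrix (Fin (r + 1)) (Fin (r + 1)) K} (hu : ∀ k, UT (u k))
    (hne : FreeAlgebra.lift K u p ≠ 0) : FreeAlgebra.lift K u p 0 (Fin.last r) ≠ 0 := by
  contrapose! hne
  ext a b
  by_cases hab : (b : ℕ) < a + r
  · exact lift_apply_eq_zero_of_lt_add (Nat.le_succ r) hp hu hab
  · obtain rfl : a = 0 := Fin.ext (by rw [Fin.val_zero]; omega)
    obtain rfl : b = Fin.last r := Fin.ext (by simp; omega)
    exact hne

theorem HasOrder.exists_lift_apply_ne_zero (hp : HasOrder p r) {i j : Fin n}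
    (hij : (j : ℕ) = i + r) :
    ∃ w : Fin m → Matrix (Fin n) (Fin n) K, (∀ k, (w k).IsUpperTriangular) ∧
      FreeAlgebra.lift K w p i j ≠ 0 := by
  obtain ⟨hvan, u, hu, hne⟩ := hp
  have hs : (i : ℕ) + (r + 1) ≤ n := by omega
  have hw k := (ut_iff_isUpperTriangular.1 (hu k)).extend (window hs)
  refine ⟨fun k => (u k).extend (window hs), hw, ?_⟩
  have key := congr_fun₂ (IsUpperTriangular.lift_submatrix hw (ordConnected_range_window hs) p)
    0 (Fin.last r)
  have hi : window hs 0 = i := Fin.ext (by simp)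
  have hj : window hs (Fin.last r) = j := Fin.ext (by simp [hij])
  simp only [submatrix_extend _ (window hs).injective, submatrix_apply, hi, hj] at key
  rw [key]
  exact lift_apply_zero_last_ne_zero hvan hu hne

end HasOrder

namespace MvPolynomial

theorem exists_forall_eval_ne_zero {R σ α : Type*} [CommRing R] [IsDomain R] [Infinite R]
    (S : Finset α) {P : α → MvPolynomial σ R} (hP : ∀ a ∈ S, P a ≠ 0) :
    ∃ v, ∀ a ∈ S, eval v (P a) ≠ 0 := by
  obtain ⟨v, hv⟩ : ∃ v, eval v (∏ a ∈ S, P a) ≠ 0 := by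
    by_contra! h
    exact Finset.prod_ne_zero_iff.2 hP (funext fun v => by simpa using h v)
  rw [map_prod] at hv
  exact ⟨v, Finset.prod_ne_zero_iff.1 hv⟩

end MvPolynomial

namespace Matrix

open MvPolynomial

variable {ι R X : Type*} [CommRing R] [LinearOrder ι]

variable (R) in
noncomputable def genericUpperTriangular (x : X) : Matrix ι ι (MvPolynomial (X × ι × ι) R) :=
  of fun i j => if i ≤ j then MvPolynomial.X (x, i, j) else 0

theorem isUpperTriangular_genericUpperTriangular (x : X) :
    (genericUpperTriangular R x : Matrix ι ι _).IsUpperTriangular :=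
  fun _ _ hji => if_neg (not_le.2 hji)

theorem map_genericUpperTriangular {u : X → Matrix ι ι R} (hu : ∀ x, (u x).IsUpperTriangular)
    (x : X) : (genericUpperTriangular R x).map (aeval fun y => u y.1 y.2.1 y.2.2) = u x := by
  ext i j
  by_cases hij : i ≤ j
  · simp [genericUpperTriangular, hij]
  · simp [genericUpperTriangular, hij, hu x (not_le.1 hij)]

theorem exists_forall_lift_apply_ne_zero [Fintype ι] [IsDomain R] [Infinite R]
    (p : FreeAlgebra R X) (S : Finset (ι × ι))
    (hS : ∀ ij ∈ S, ∃ u : X → Matrix ι ι R, (∀ x, (u x).IsUpperTriangular) ∧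
      FreeAlgebra.lift R u p ij.1 ij.2 ≠ 0) :
    ∃ u : X → Matrix ι ι R, (∀ x, (u x).IsUpperTriangular) ∧
      ∀ ij ∈ S, FreeAlgebra.lift R u p ij.1 ij.2 ≠ 0 := by
  let G := FreeAlgebra.lift R (genericUpperTriangular R (ι := ι)) p
  have hG v : (G.map (aeval v) : Matrix ι ι R) =
      FreeAlgebra.lift R (fun x => (genericUpperTriangular R x).map (aeval v)) p :=
    FreeAlgebra.apply_lift (aeval v).mapMatrix _ p
  obtain ⟨v, hv⟩ := exists_forall_eval_ne_zero S (P := fun ij => G ij.1 ij.2) fun ij hij hG0 => by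
    obtain ⟨u, hu, hne⟩ := hS ij hij
    have := congr_fun₂ (hG fun y => u y.1 y.2.1 y.2.2) ij.1 ij.2
    simp only [map_apply, hG0, map_zero, map_genericUpperTriangular hu] at this
    exact hne this.symm
  refine ⟨fun x => (genericUpperTriangular R x).map (aeval v),
    fun x => (isUpperTriangular_genericUpperTriangular x).map _, fun ij hij => ?_⟩
  rw [← hG, map_apply]
  exact hv ij hij

end Matrix

theorem Finset.prod_range_add_div_eq_mul {M : Type*} [CommMonoid M] (g : ℕ → M) {r : ℕ}
    (hr : 0 < r) (i : ℕ) :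
    ∏ q ∈ range ((i + r) / r), g ((i + r) % r + r * q) =
      (∏ q ∈ range (i / r), g (i % r + r * q)) * g i := by
  rw [Nat.add_div_right _ hr, Nat.add_mod_right, prod_range_succ, Nat.mod_add_div]

theorem Fin.sum_univ_eq_sum_of_subset {M : Type*} [AddCommMonoid M] {n : ℕ} (f : ℕ → M)
    {s : Finset ℕ} (hs : s ⊆ Finset.range n) (hf : ∀ l < n, l ∉ s → f l = 0) :
    ∑ l : Fin n, f l = ∑ l ∈ s, f l := by
  rw [Fin.sum_univ_eq_sum_range]
  exact (Finset.sum_subset hs fun l hl hls => hf l (Finset.mem_range.1 hl) hls).symm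

namespace Matrix

open Finset

variable {K : Type*} [Field K] {n r : ℕ}

theorem exists_diagonal_conj_apply_eq (hr : 0 < r) {A B : Matrix (Fin n) (Fin n) K}
    (hA : ∀ i j : Fin n, (j : ℕ) = i + r → A i j ≠ 0)
    (hB : ∀ i j : Fin n, (j : ℕ) = i + r → B i j ≠ 0) :
    ∃ D : (Matrix (Fin n) (Fin n) K)ˣ, (D : Matrix (Fin n) (Fin n) K).IsUpperTriangular ∧
      ∀ i j : Fin n, (j : ℕ) = i + r →
        ((D : Matrix (Fin n) (Fin n) K) * B * (↑D⁻¹ : Matrix (Fin n) (Fin n) K)) i j = A i j := by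
  -- the diagonal `d` of `D` has to satisfy `d (i + r) = d i * (B i (i + r) / A i (i + r))`
  let f : ℕ → K := fun k =>
    if h : k + r < n then B ⟨k, by omega⟩ ⟨k + r, h⟩ / A ⟨k, by omega⟩ ⟨k + r, h⟩ else 1
  have hf k : f k ≠ 0 := by
    unfold f
    split_ifs
    exacts [div_ne_zero (hB _ _ rfl) (hA _ _ rfl), one_ne_zero]
  let d : ℕ → K := fun i => ∏ q ∈ range (i / r), f (i % r + r * q)
  have hd i : d i ≠ 0 := prod_ne_zero_iff.2 fun _ _ => hf _
  let D : (Matrix (Fin n) (Fin n) K)ˣ :=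
    ⟨diagonal fun i => d i, diagonal fun i => (d i)⁻¹, by simp [hd], by simp [hd]⟩
  refine ⟨D, blockTriangular_diagonal _, fun i j hij => ?_⟩
  have hdj : d j = d i * f i := by rw [hij]; exact prod_range_add_div_eq_mul f hr i
  have hfi : f i = B i j / A i j := by
    have hj : (⟨i + r, by omega⟩ : Fin n) = j := Fin.ext hij.symm
    simp [f, dif_pos (show (i : ℕ) + r < n by omega), hj]
  have hAij := hA i j hij
  have hBij := hB i j hij
  have hdi := hd i
  change (diagonal (fun i : Fin n => d i) * B * diagonal fun i : Fin n => (d i)⁻¹) i j = A i j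
  rw [mul_diagonal, diagonal_mul, hdj, hfi]
  field_simp

/-- Junk value `0` outside `Fin n`. -/
def natEntry (A : Matrix (Fin n) (Fin n) K) (i j : ℕ) : K :=
  if h : i < n ∧ j < n then A ⟨i, h.1⟩ ⟨j, h.2⟩ else 0

@[simp]
theorem natEntry_coe (A : Matrix (Fin n) (Fin n) K) (i j : Fin n) : natEntry A i j = A i j :=
  dif_pos ⟨i.2, j.2⟩

theorem natEntry_eq_zero_of_lt_add {A : Matrix (Fin n) (Fin n) K}
    (hA : ∀ i j : Fin n, (j : ℕ) < i + r → A i j = 0) {i j : ℕ} (hij : j < i + r) :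
    natEntry A i j = 0 := by
  unfold natEntry
  split_ifs
  exacts [hA _ _ hij, rfl]

/-- Back substitution for `N` in `(1 + N) * B = A * (1 + N)`: entry `(i, j)` of `N` is read off
from entry `(i, j + r)` of the equation, where it appears multiplied by `A j (j + r)`, beside
entries of `N` of smaller level `j - i` or of the same level in lower rows. -/
def backSubst (A B : Matrix (Fin n) (Fin n) K) (r i j : ℕ) : K :=
  if 0 < r ∧ i < j ∧ j + r < n then
    (natEntry A i (j + r) - natEntry B i (j + r)
      - ∑ l ∈ (Ioo i j).attach, backSubst A B r i l * natEntry B l (j + r)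
      + ∑ l ∈ (Ico (i + r) (j + r)).attach, natEntry A i l * backSubst A B r l (j + r))
    / natEntry A j (j + r)
  else 0
termination_by (j - i, n - i)
decreasing_by
  all_goals
    have hl := l.2
    simp only [mem_Ioo, mem_Ico] at hl
    simp only [Prod.lex_def]
    omega

variable {A B : Matrix (Fin n) (Fin n) K}

theorem backSubst_eq (hr : 0 < r) {i j : ℕ} (hij : i < j) (hj : j + r < n) :
    backSubst A B r i j =
      (natEntry A i (j + r) - natEntry B i (j + r)
        - ∑ l ∈ Ioo i j, backSubst A B r i l * natEntry B l (j + r)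
        + ∑ l ∈ Ico (i + r) (j + r), natEntry A i l * backSubst A B r l (j + r))
      / natEntry A j (j + r) := by
  rw [backSubst, if_pos ⟨hr, hij, hj⟩,
    sum_attach (Ioo i j) fun l => backSubst A B r i l * natEntry B l (j + r),
    sum_attach (Ico (i + r) (j + r)) fun l => natEntry A i l * backSubst A B r l (j + r)]

theorem backSubst_of_le {i j : ℕ} (hji : j ≤ i) : backSubst A B r i j = 0 := by
  rw [backSubst, if_neg (by omega)]

theorem sum_backSubst_mul_eq (hB : ∀ i j : Fin n, (j : ℕ) < i + r → B i j = 0) (i j : Fin n) :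
    ∑ l : Fin n, backSubst A B r i l * B l j =
      ∑ l ∈ Ioc (i : ℕ) (j - r), backSubst A B r i l * natEntry B l j := by
  simp_rw [← natEntry_coe B _ j]
  refine Fin.sum_univ_eq_sum_of_subset (fun l => backSubst A B r i l * natEntry B l j)
    (fun l hl => by simp only [mem_Ioc, mem_range] at hl ⊢; omega) fun l _ hl => ?_
  rcases le_or_gt l i with hli | hli
  · rw [backSubst_of_le hli, zero_mul]
  · rw [natEntry_eq_zero_of_lt_add hB (by simp only [mem_Ioc] at hl; omega), mul_zero]

theorem sum_mul_backSubst_eq (hA : ∀ i j : Fin n, (j : ℕ) < i + r → A i j = 0) (i j : Fin n) :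
    ∑ l : Fin n, A i l * backSubst A B r l j =
      ∑ l ∈ Ico ((i : ℕ) + r) j, natEntry A i l * backSubst A B r l j := by
  simp_rw [← natEntry_coe A i]
  refine Fin.sum_univ_eq_sum_of_subset (fun l => natEntry A i l * backSubst A B r l j)
    (fun l hl => by simp only [mem_Ico, mem_range] at hl ⊢; omega) fun l _ hl => ?_
  rcases lt_or_ge l (i + r) with hli | hli
  · rw [natEntry_eq_zero_of_lt_add hA hli, zero_mul]
  · rw [backSubst_of_le (by simp only [mem_Ico] at hl; omega), mul_zero]

theorem one_add_backSubst_mul (hr : 0 < r)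
    (hA : ∀ i j : Fin n, (j : ℕ) < i + r → A i j = 0)
    (hB : ∀ i j : Fin n, (j : ℕ) < i + r → B i j = 0)
    (hBA : ∀ i j : Fin n, (j : ℕ) = i + r → B i j = A i j)
    (hA0 : ∀ i j : Fin n, (j : ℕ) = i + r → A i j ≠ 0) :
    (1 + of fun i j : Fin n => backSubst A B r i j) * B =
      A * (1 + of fun i j : Fin n => backSubst A B r i j) := by
  ext i j
  rw [add_mul, mul_add, one_mul, mul_one, add_apply, add_apply, mul_apply, mul_apply]
  simp only [of_apply]
  rw [sum_backSubst_mul_eq hB, sum_mul_backSubst_eq hA]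
  rcases le_or_gt (j : ℕ) (i + r) with hji | hji
  · rw [Ioc_eq_empty (by omega), Ico_eq_empty (by omega), sum_empty, sum_empty]
    rcases hji.lt_or_eq with hji | hji
    · rw [hA i j hji, hB i j hji]
    · rw [hBA i j hji]
  obtain ⟨k, hk⟩ : ∃ k, (j : ℕ) = k + r := ⟨j - r, by omega⟩
  have hik : (i : ℕ) < k := by omega
  have hkn : k < n := by omega
  have hBAk : natEntry B k j = natEntry A k j :=
    (natEntry_coe B ⟨k, hkn⟩ j).trans ((hBA _ j hk).trans (natEntry_coe A ⟨k, hkn⟩ j).symm)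
  have hAk : natEntry A k j ≠ 0 := (natEntry_coe A ⟨k, hkn⟩ j).trans_ne (hA0 _ j hk)
  have hN := backSubst_eq (A := A) (B := B) hr hik (hk ▸ j.2)
  rw [← hk] at hN
  rw [show (j : ℕ) - r = k by omega, ← Ioo_insert_right hik, sum_insert (by simp), hN, hBAk,
    div_mul_cancel₀ _ hAk, ← natEntry_coe A i j, ← natEntry_coe B i j]
  ring

theorem exists_unipotent_conj_eq (hr : 0 < r)
    (hA : ∀ i j : Fin n, (j : ℕ) < i + r → A i j = 0)
    (hB : ∀ i j : Fin n, (j : ℕ) < i + r → B i j = 0)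
    (hBA : ∀ i j : Fin n, (j : ℕ) = i + r → B i j = A i j)
    (hA0 : ∀ i j : Fin n, (j : ℕ) = i + r → A i j ≠ 0) :
    ∃ U : (Matrix (Fin n) (Fin n) K)ˣ, (U : Matrix (Fin n) (Fin n) K).IsUpperTriangular ∧
      (U : Matrix (Fin n) (Fin n) K) * B * (↑U⁻¹ : Matrix (Fin n) (Fin n) K) = A := by
  set N : Matrix (Fin n) (Fin n) K := of fun i j => backSubst A B r i j
  have hUT : (1 + N).IsUpperTriangular :=
    blockTriangular_one.add fun _ _ hji => backSubst_of_le (le_of_lt hji)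
  have hdet : (1 + N).det = 1 := by
    rw [det_of_isUpperTriangular hUT]
    exact prod_eq_one fun i _ => by simp [N, backSubst_of_le le_rfl]
  let U := ((isUnit_iff_isUnit_det _).2 (hdet ▸ isUnit_one)).unit
  exact ⟨U, hUT, (Units.mul_inv_eq_iff_eq_mul _).2 (one_add_backSubst_mul hr hA hB hBA hA0)⟩

end Matrix

theorem stmt_8_general {K : Type*} [Field K] [Infinite K] (m n r : ℕ)
    (p : FreeAlgebra K (Fin m))
    (hord : HasOrder p r) (hr1 : 1 < r) (hr2 : r + 1 < n)
    (A' : Matrix (Fin n) (Fin n) K)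
    (hA1 : ∀ i j : Fin n, (j : ℕ) < (i : ℕ) + r → A' i j = 0)
    (hA2 : ∀ i j : Fin n, (j : ℕ) = (i : ℕ) + r → A' i j ≠ 0) :
    ∃ u : Fin m → Matrix (Fin n) (Fin n) K, (∀ i, UT (u i)) ∧
      FreeAlgebra.lift K u p = A' := by
  obtain ⟨w, hw, hwA⟩ := exists_forall_lift_apply_ne_zero p
    {ij : Fin n × Fin n | (ij.2 : ℕ) = ij.1 + r} fun ij hij =>
      hord.exists_lift_apply_ne_zero (Finset.mem_filter.1 hij).2
  obtain ⟨D, hD, hDA⟩ := exists_diagonal_conj_apply_eq (B := FreeAlgebra.lift K w p)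
    (by omega) hA2 fun i j hij => hwA (i, j) (by simpa using hij)
  let w' : Fin m → Matrix (Fin n) (Fin n) K :=
    fun k => D * w k * (↑D⁻¹ : Matrix (Fin n) (Fin n) K)
  have hw' k : UT (w' k) := ut_iff_isUpperTriangular.2 (hD.units_conj (hw k))
  obtain ⟨U, hU, hUA⟩ := exists_unipotent_conj_eq (B := FreeAlgebra.lift K w' p)
    (by omega) hA1 (fun i j => lift_apply_eq_zero_of_lt_add (by omega) hord.1 hw')
    (fun i j hij => by rw [FreeAlgebra.lift_units_conj]; exact hDA i j hij) hA2
  exact ⟨fun k => U * w' k * (↑U⁻¹ : Matrix (Fin n) (Fin n) K),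
    fun k => hU.units_conj (hw' k), by rw [FreeAlgebra.lift_units_conj, hUA]⟩

theorem stmt_8 {K : Type*} [Field K] [Infinite K] (m n r : ℕ) (hm : 1 ≤ m) (hn : 2 ≤ n)
    (p : FreeAlgebra K (Fin m)) (hp : ZeroConst p)
    (hord : HasOrder p r) (hr1 : 1 < r) (hr2 : r + 1 < n)
    (A' : Matrix (Fin n) (Fin n) K)
    (hA1 : ∀ i j : Fin n, (j : ℕ) < (i : ℕ) + r → A' i j = 0)
    (hA2 : ∀ i j : Fin n, (j : ℕ) = (i : ℕ) + r → A' i j ≠ 0) :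
    ∃ u : Fin m → Matrix (Fin n) (Fin n) K, (∀ i, UT (u i)) ∧
      FreeAlgebra.lift K u p = A' :=
  stmt_8_general m n r p hord hr1 hr2 A' hA1 hA2
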